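/- Let d ≥ 1, let ε₀ ∈ (0, min(1/10, 2^{−d})], and define f̄ : ℝ^d → ℝ by f̄(x) = (Γ(3 + d/2)/(2π^{d/2}))·(1 − ‖x‖²)² for ‖x‖ < 1 and f̄(x) = 0 otherwise. Then for every x ∈ ℝ^d with ‖x‖ < 1 and every r ∈ (0, ε₀], ∫_{B_r(x)} f̄(u) du ≥ ε₀ · a_d · r^d · f̄(x). -/

import Mathlib

open MeasureTheory

noncomputable section

/-- The density `f̄(x) = (Γ(3 + d/2)/(2π^{d/2}))(1 - ‖x‖²)² 𝟙_{‖x‖ < 1}`. -/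
noncomputable def fbar (d : ℕ) (x : EuclideanSpace ℝ (Fin d)) : ℝ :=
  if ‖x‖ < 1 then
    Real.Gamma (3 + (d : ℝ) / 2) / (2 * Real.pi ^ ((d : ℝ) / 2)) * (1 - ‖x‖ ^ 2) ^ 2
  else 0

/-!
Bound the integral from below by the integral over a smaller ball `B_ρ(c) ⊆ B_r(x)` lying in
`closedBall 0 t`, where `f̄ ≥ fbarConst d * (1 - t²)²`. If `‖x‖ ≥ r/2`, take `ρ = r/2` and `c` on
the segment `[0, x]` at distance `r/2` from `x`, so `t = ‖x‖` and the volume `a_d (r/2)^d` is at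
least `ε₀ a_d r^d` because `ε₀ ≤ 2^{-d}`. If `‖x‖ < r/2`, take `c = 0` and `ρ = t = r - ‖x‖ > r/2`:
the gain in radius over `r/2` outweighs the smaller profile value `(1 - t²)²`, because `r ≤ 1/10`.
-/

open Metric

theorem mul_measureReal_le_setIntegral_of_subset {α : Type*} [MeasurableSpace α] {μ : Measure α}
    {f : α → ℝ} {s t : Set α} {m : ℝ} (hf : IntegrableOn f s μ) (hf0 : 0 ≤ᵐ[μ.restrict s] f)
    (ht : MeasurableSet t) (hμt : μ t ≠ ⊤) (hts : t ⊆ s) (hm : ∀ u ∈ t, m ≤ f u) :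
    m * μ.real t ≤ ∫ u in s, f u ∂μ :=
  (setIntegral_ge_of_const_le_real ht hμt hm (hf.mono_set hts)).trans
    (setIntegral_mono_set hf hf0 (Filter.Eventually.of_forall hts))

theorem exists_dist_eq_and_norm_eq_sub {E : Type*} [NormedAddCommGroup E] [NormedSpace ℝ E]
    {x : E} {ρ : ℝ} (hρ : 0 < ρ) (hρx : ρ ≤ ‖x‖) :
    ∃ c : E, dist c x = ρ ∧ ‖c‖ = ‖x‖ - ρ := by
  have hx : 0 < ‖x‖ := hρ.trans_le hρx
  refine ⟨AffineMap.lineMap x 0 (ρ / ‖x‖), ?_, ?_⟩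
  · rw [dist_lineMap_left, dist_zero_right, Real.norm_of_nonneg (by positivity),
      div_mul_cancel₀ _ hx.ne']
  · rw [← dist_zero_right, dist_lineMap_right, dist_zero_right,
      Real.norm_of_nonneg (by rw [sub_nonneg, div_le_one hx]; exact hρx), sub_mul,
      div_mul_cancel₀ _ hx.ne', one_mul]

theorem one_sub_sq_sq_mul_le {s r : ℝ} (hs : 0 ≤ s) (hsr : 2 * s ≤ r) (hr : r ≤ 1 / 10) :
    (1 - s ^ 2) ^ 2 * r ≤ (1 - (r - s) ^ 2) ^ 2 * (2 * (r - s)) := by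
  have hfactor : (1 - (r - s) ^ 2) ^ 2 * (2 * (r - s)) - (1 - s ^ 2) ^ 2 * r
      = (r - 2 * s) * ((1 - (r - s) ^ 2) ^ 2 - r ^ 2 * (2 - (r - s) ^ 2 - s ^ 2)) := by ring
  have hr2 : r ^ 2 ≤ 1 / 100 := by nlinarith
  have hrs2 : (r - s) ^ 2 ≤ 1 / 100 := by nlinarith
  have h1 : 9 / 10 ≤ (1 - (r - s) ^ 2) ^ 2 := by nlinarith
  have h2 : r ^ 2 * (2 - (r - s) ^ 2 - s ^ 2) ≤ 1 / 50 := by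
    nlinarith [mul_nonneg (sq_nonneg r) (sq_nonneg (r - s)), mul_nonneg (sq_nonneg r) (sq_nonneg s)]
  nlinarith [mul_nonneg (sub_nonneg.2 hsr) (by linarith : (0 : ℝ) ≤ (1 - (r - s) ^ 2) ^ 2 - r ^ 2 * (2 - (r - s) ^ 2 - s ^ 2))]

theorem mul_pow_mul_one_sub_sq_sq_le {d : ℕ} (hd : 1 ≤ d) {ε s r : ℝ} (hε0 : 0 ≤ ε)
    (hε : ε * 2 ^ d ≤ 1) (hs : 0 ≤ s) (hsr : 2 * s ≤ r) (hr : r ≤ 1 / 10) :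
    ε * r ^ d * (1 - s ^ 2) ^ 2 ≤ (1 - (r - s) ^ 2) ^ 2 * (r - s) ^ d := by
  obtain ⟨k, rfl⟩ : ∃ k, d = k + 1 := ⟨d - 1, by omega⟩
  have hpow : r ^ k ≤ (2 * (r - s)) ^ k := pow_le_pow_left₀ (by linarith) (by linarith) k
  have hkey : (1 - s ^ 2) ^ 2 * r ^ (k + 1) ≤ (1 - (r - s) ^ 2) ^ 2 * (2 * (r - s)) ^ (k + 1) := by
    rw [pow_succ' r, pow_succ' (2 * (r - s)), ← mul_assoc, ← mul_assoc]
    exact mul_le_mul (one_sub_sq_sq_mul_le hs hsr hr) hpow (pow_nonneg (by linarith) k)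
      (mul_nonneg (sq_nonneg _) (by linarith))
  calc ε * r ^ (k + 1) * (1 - s ^ 2) ^ 2 = ε * ((1 - s ^ 2) ^ 2 * r ^ (k + 1)) := by ring
    _ ≤ ε * ((1 - (r - s) ^ 2) ^ 2 * (2 * (r - s)) ^ (k + 1)) := by gcongr
    _ = ε * 2 ^ (k + 1) * ((1 - (r - s) ^ 2) ^ 2 * (r - s) ^ (k + 1)) := by rw [mul_pow]; ring
    _ ≤ (1 - (r - s) ^ 2) ^ 2 * (r - s) ^ (k + 1) :=
      mul_le_of_le_one_left (mul_nonneg (sq_nonneg _) (pow_nonneg (by linarith) _)) hε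

theorem exists_ball_subset_ball_and_closedBall {E : Type*} [NormedAddCommGroup E]
    [NormedSpace ℝ E] {d : ℕ} (hd : 1 ≤ d) {ε r : ℝ} (hε0 : 0 ≤ ε) (hε : ε * 2 ^ d ≤ 1)
    (hr : 0 < r) (hr1 : r ≤ 1 / 10) {x : E} (hx : ‖x‖ ≤ 1) :
    ∃ (c : E) (ρ t : ℝ), 0 ≤ ρ ∧ t ≤ 1 ∧ ball c ρ ⊆ ball x r ∧ ball c ρ ⊆ closedBall 0 t ∧
      ε * r ^ d * (1 - ‖x‖ ^ 2) ^ 2 ≤ (1 - t ^ 2) ^ 2 * ρ ^ d := by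
  rcases le_or_gt (r / 2) ‖x‖ with hfar | hnear
  · obtain ⟨c, hcx, hc⟩ := exists_dist_eq_and_norm_eq_sub (half_pos hr) hfar
    refine ⟨c, r / 2, ‖x‖, by positivity, hx, ball_subset_ball' (by linarith),
      ball_subset_closedBall.trans (closedBall_subset_closedBall' ?_), ?_⟩
    · rw [dist_zero_right, hc]; linarith
    · have hεr : ε * r ^ d ≤ (r / 2) ^ d := by
        rw [div_pow, le_div_iff₀ (by positivity), mul_right_comm]
        exact mul_le_of_le_one_left (by positivity) hε
      calc ε * r ^ d * (1 - ‖x‖ ^ 2) ^ 2 ≤ (r / 2) ^ d * (1 - ‖x‖ ^ 2) ^ 2 := by gcongr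
        _ = (1 - ‖x‖ ^ 2) ^ 2 * (r / 2) ^ d := mul_comm _ _
  · have hx0 := norm_nonneg x
    refine ⟨0, r - ‖x‖, r - ‖x‖, by linarith, by linarith, ball_subset_ball' ?_,
      ball_subset_closedBall,
      mul_pow_mul_one_sub_sq_sq_le hd hε0 hε (norm_nonneg x) (by linarith) hr1⟩
    rw [dist_zero_left]; linarith

theorem EuclideanSpace.measureReal_ball_fin {d : ℕ} (hd : 1 ≤ d) (c : EuclideanSpace ℝ (Fin d))
    {ρ : ℝ} (hρ : 0 ≤ ρ) :
    volume.real (ball c ρ) = ρ ^ d * (Real.pi ^ ((d : ℝ) / 2) / Real.Gamma ((d : ℝ) / 2 + 1)) := by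
  have : Nonempty (Fin d) := Fin.pos_iff_nonempty.mp hd
  rw [measureReal_def, EuclideanSpace.volume_ball, ENNReal.toReal_mul, ENNReal.toReal_pow,
    ENNReal.toReal_ofReal hρ, ENNReal.toReal_ofReal (by positivity), Fintype.card_fin,
    Real.sqrt_eq_rpow, ← Real.rpow_mul_natCast Real.pi_pos.le, one_div_mul_eq_div]

def fbarConst (d : ℕ) : ℝ := Real.Gamma (3 + (d : ℝ) / 2) / (2 * Real.pi ^ ((d : ℝ) / 2))

theorem fbarConst_pos (d : ℕ) : 0 < fbarConst d :=
  div_pos (Real.Gamma_pos_of_pos (by positivity)) (by positivity)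

theorem fbar_of_norm_lt {d : ℕ} {x : EuclideanSpace ℝ (Fin d)} (hx : ‖x‖ < 1) :
    fbar d x = fbarConst d * (1 - ‖x‖ ^ 2) ^ 2 :=
  if_pos hx

theorem fbar_nonneg (d : ℕ) (x : EuclideanSpace ℝ (Fin d)) : 0 ≤ fbar d x := by
  unfold fbar
  split_ifs
  exacts [mul_nonneg (fbarConst_pos d).le (sq_nonneg _), le_rfl]

theorem fbar_le_fbarConst (d : ℕ) (x : EuclideanSpace ℝ (Fin d)) : fbar d x ≤ fbarConst d := by
  by_cases hx : ‖x‖ < 1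
  · rw [fbar_of_norm_lt hx]
    have := norm_nonneg x
    exact mul_le_of_le_one_right (fbarConst_pos d).le (pow_le_one₀ (by nlinarith) (by nlinarith))
  · rw [fbar, if_neg hx]
    exact (fbarConst_pos d).le

theorem fbarConst_mul_le_fbar {d : ℕ} {u : EuclideanSpace ℝ (Fin d)} {t : ℝ} (hu : ‖u‖ ≤ t)
    (ht : t ≤ 1) : fbarConst d * (1 - t ^ 2) ^ 2 ≤ fbar d u := by
  have hu0 := norm_nonneg u
  by_cases hu1 : ‖u‖ < 1
  · rw [fbar_of_norm_lt hu1]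
    have : 0 ≤ 1 - t ^ 2 := by nlinarith
    have := (fbarConst_pos d).le
    gcongr
  · rw [fbar, if_neg hu1, show t = 1 by linarith]
    simp

theorem measurable_fbar (d : ℕ) : Measurable (fbar d) :=
  Measurable.ite (measurableSet_lt (by fun_prop) measurable_const) (by fun_prop) measurable_const

theorem integrableOn_fbar {d : ℕ} {s : Set (EuclideanSpace ℝ (Fin d))} (hs : volume s ≠ ⊤) :
    IntegrableOn (fbar d) s :=
  Measure.integrableOn_of_bounded hs (measurable_fbar d).aestronglyMeasurable
    (Filter.Eventually.of_forall fun x => by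
      rw [Real.norm_of_nonneg (fbar_nonneg d x)]; exact fbar_le_fbarConst d x)

theorem stmt13 (d : ℕ) (hd : 1 ≤ d) (ε₀ : ℝ)
    (hε₀ : 0 < ε₀) (hε₀' : ε₀ ≤ min (1/10 : ℝ) ((2 : ℝ) ^ (-(d : ℝ))))
    (x : EuclideanSpace ℝ (Fin d)) (hx : ‖x‖ < 1) (r : ℝ) (hr : 0 < r) (hr' : r ≤ ε₀) :
    ε₀ * (Real.pi ^ ((d : ℝ) / 2) / Real.Gamma ((d : ℝ) / 2 + 1)) * r ^ d * fbar d x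
      ≤ ∫ u in Metric.ball x r, fbar d u := by
  set a := Real.pi ^ ((d : ℝ) / 2) / Real.Gamma ((d : ℝ) / 2 + 1)
  have ha : 0 < a := div_pos (by positivity) (Real.Gamma_pos_of_pos (by positivity))
  have hε₀_le : ε₀ ≤ 1 / 10 := hε₀'.trans (min_le_left _ _)
  have hε₀_mul : ε₀ * 2 ^ d ≤ 1 := by
    have h := hε₀'.trans (min_le_right _ _)
    rw [Real.rpow_neg zero_le_two, Real.rpow_natCast] at h
    rwa [← le_div_iff₀ (by positivity), one_div]
  obtain ⟨c, ρ, t, hρ, ht, hsub, hct, hineq⟩ := exists_ball_subset_ball_and_closedBall hd hε₀.le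
    hε₀_mul hr (hr'.trans hε₀_le) hx.le
  calc ε₀ * a * r ^ d * fbar d x = fbarConst d * a * (ε₀ * r ^ d * (1 - ‖x‖ ^ 2) ^ 2) := by
        rw [fbar_of_norm_lt hx]; ring
    _ ≤ fbarConst d * a * ((1 - t ^ 2) ^ 2 * ρ ^ d) :=
        mul_le_mul_of_nonneg_left hineq (mul_pos (fbarConst_pos d) ha).le
    _ = fbarConst d * (1 - t ^ 2) ^ 2 * volume.real (ball c ρ) := by
        rw [EuclideanSpace.measureReal_ball_fin hd c hρ]; ring
    _ ≤ ∫ u in ball x r, fbar d u :=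
        mul_measureReal_le_setIntegral_of_subset (integrableOn_fbar measure_ball_lt_top.ne)
          (ae_of_all _ (fbar_nonneg d)) measurableSet_ball measure_ball_lt_top.ne hsub
          fun u hu => fbarConst_mul_le_fbar (mem_closedBall_zero_iff.1 (hct hu)) ht
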